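/- arXiv:2006.01529 — 3 statements merged into one kernel-verified Lean document; each statement's English description precedes it below -/
import Mathlib

section
/- For x ∈ ℝ^{n²} with x = vec(X) for some 0-1 matrix X (i.e. x ∘ x = x), if (e^T ⊗ I_n)x = e, then trace(((ee^T ⊗ I_n) − I_{n²}) xx^T) = 0. -/
open Kronecker

/-- For a 0-1 vector `x ∈ ℝ^{n²}` (i.e. `x ∘ x = x`) with `(eᵀ ⊗ I) x = e`,
one has `trace(((eeᵀ ⊗ I) − I) x xᵀ) = 0`. -/
theorem trace_gangster_zero (n : ℕ) (x : Fin n × Fin n → ℝ)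
    (h01 : ∀ p, x p * x p = x p)
    (hrow : (((Matrix.of fun _ : Unit => fun _ : Fin n => (1 : ℝ)) ⊗ₖ
        (1 : Matrix (Fin n) (Fin n) ℝ)).mulVec x) = (fun _ => 1)) :
    Matrix.trace
      ((((Matrix.of fun _ _ : Fin n => (1 : ℝ)) ⊗ₖ (1 : Matrix (Fin n) (Fin n) ℝ)) - 1) *
        Matrix.vecMulVec x x) = 0 := by
  have hcol : ∀ j : Fin n, ∑ i : Fin n, x (i, j) = 1 := by
    intro j
    have h := congrFun hrow ((), j)
    simpa [Matrix.mulVec, dotProduct, Fintype.sum_prod_type, Matrix.one_apply] using h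
  simp only [Matrix.trace, Matrix.diag, Matrix.mul_apply, Matrix.sub_apply,
    Matrix.kroneckerMap_apply, Matrix.vecMulVec_apply, Matrix.of_apply,
    Matrix.one_apply, Fintype.sum_prod_type, Prod.mk.injEq]
  have key : ∀ i j : Fin n,
      ∑ a : Fin n, ∑ b : Fin n,
        ((1 * if j = b then (1:ℝ) else 0) - if i = a ∧ j = b then 1 else 0) * (x (a, b) * x (i, j))
      = (∑ a : Fin n, x (a, j)) * x (i, j) - x (i, j) * x (i, j) := by
    intro i j
    simp only [one_mul, sub_mul, Finset.sum_sub_distrib, ite_mul, zero_mul, one_mul]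
    rw [Finset.sum_mul]
    congr 1
    · exact Finset.sum_congr rfl fun a _ => by simp [Finset.sum_ite_eq]
    · simp [ite_and, Finset.sum_ite_eq, Finset.sum_ite_eq']
  calc ∑ i : Fin n, ∑ j : Fin n, ∑ a : Fin n, ∑ b : Fin n,
        ((1 * if j = b then (1:ℝ) else 0) - if i = a ∧ j = b then 1 else 0) * (x (a, b) * x (i, j))
      = ∑ i : Fin n, ∑ j : Fin n, ((∑ a : Fin n, x (a, j)) * x (i, j) - x (i, j) * x (i, j)) := by
        refine Finset.sum_congr rfl fun i _ => Finset.sum_congr rfl fun j _ => key i j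
    _ = 0 := by
        simp only [hcol, one_mul, h01, sub_self, Finset.sum_const_zero]
end

section
/- Let V̂ ∈ ℝ^{(n²+1)×((n−1)²+1)} be the block matrix with V̂ = [[1, 0],[e_{n²}/n, V_e ⊗ V_e]], where V_e = [I_{n−1}; −e_{n−1}^T] ∈ ℝ^{n×(n−1)}. Let K = [−e_{n²}^T; H^T][−e_{n²}, H] with H = [e^T ⊗ I_n; I_n ⊗ e^T]. Then the range (column space) of V̂ equals the null space of K, i.e., range(V̂) = null(K). -/
/-!
Because `ker (Mᵀ M) = ker M`, a vector `(t, X)` lies in the null space exactly when every row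
and column sum of the `n × n` array `X` equals `t`. Subtracting `t / n` from every entry reduces
this to `X` having zero line sums, and such arrays are exactly the matrices `Vₑ Y Vₑᵀ`: the columns
`e_k - e_n` of `Vₑ` kill the all-ones covector, and a sum-zero vector is recovered by `Vₑ` from its
first `n - 1` coordinates. Vectorisation turns `Vₑ Y Vₑᵀ` into `(Vₑ ⊗ Vₑ) vec Y`.
-/

open Matrix Kronecker

variable {R : Type*}

def zeroSumBasis (R : Type*) [Ring R] (m : ℕ) : Matrix (Fin (m + 1)) (Fin m) R :=
  of fun i k => if (i : ℕ) = k then 1 else if (i : ℕ) = m then -1 else 0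

section zeroSumBasis

variable {m : ℕ}

section Ring

variable [Ring R]

lemma zeroSumBasis_castSucc_apply (i k : Fin m) :
    zeroSumBasis R m i.castSucc k = (1 : Matrix (Fin m) (Fin m) R) i k := by
  simp [zeroSumBasis, one_apply, Fin.val_eq_val, (Fin.is_lt i).ne]

lemma zeroSumBasis_last_apply (k : Fin m) : zeroSumBasis R m (Fin.last m) k = -1 := by
  simp [zeroSumBasis, (Fin.is_lt k).ne']

lemma one_vecMul_zeroSumBasis : 1 ᵥ* zeroSumBasis R m = 0 := by
  ext k
  simp [vecMul, dotProduct, Fin.sum_univ_castSucc, zeroSumBasis_castSucc_apply,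
    zeroSumBasis_last_apply, one_apply]

lemma zeroSumBasis_mul_submatrix_castSucc {n : Type*} {Z : Matrix (Fin (m + 1)) n R}
    (hZ : 1 ᵥ* Z = 0) : zeroSumBasis R m * Z.submatrix Fin.castSucc id = Z := by
  ext i j
  induction i using Fin.lastCases with
  | last =>
    have hj : ∑ i, Z i j = 0 := by simpa [vecMul, dotProduct] using congrFun hZ j
    simp only [mul_apply, submatrix_apply, id, zeroSumBasis_last_apply, neg_one_mul,
      Finset.sum_neg_distrib]
    rw [Fin.sum_univ_castSucc] at hj
    exact neg_eq_of_add_eq_zero_right hj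
  | cast i =>
    simp [mul_apply, zeroSumBasis_castSucc_apply, one_apply]

end Ring

variable [CommRing R]

lemma submatrix_castSucc_mul_zeroSumBasis_transpose {n : Type*} [Fintype n]
    {Z : Matrix n (Fin (m + 1)) R} (hZ : Z *ᵥ 1 = 0) :
    Z.submatrix id Fin.castSucc * (zeroSumBasis R m)ᵀ = Z := by
  rw [← transpose_transpose (Z.submatrix _ _), ← transpose_mul, transpose_submatrix,
    zeroSumBasis_mul_submatrix_castSucc (by rwa [vecMul_transpose]), transpose_transpose]

lemma zeroSumBasis_mul_mul_transpose {Z : Matrix (Fin (m + 1)) (Fin (m + 1)) R}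
    (hrow : Z *ᵥ 1 = 0) (hcol : 1 ᵥ* Z = 0) :
    zeroSumBasis R m * Z.submatrix Fin.castSucc Fin.castSucc * (zeroSumBasis R m)ᵀ = Z := by
  have hrow' : Z.submatrix Fin.castSucc id *ᵥ 1 = 0 := by
    ext i; exact congrFun hrow i.castSucc
  rw [Matrix.mul_assoc]
  change zeroSumBasis R m * ((Z.submatrix Fin.castSucc id).submatrix id Fin.castSucc *
    (zeroSumBasis R m)ᵀ) = Z
  rw [submatrix_castSucc_mul_zeroSumBasis_transpose hrow',
    zeroSumBasis_mul_submatrix_castSucc hcol]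

end zeroSumBasis

section lineSums

variable {m n : Type*} [Fintype m] [Fintype n]

def lineSums [AddCommMonoid R] (x : m × n → R) : n ⊕ m → R :=
  Sum.elim (fun j => ∑ i, x (i, j)) (fun i => ∑ j, x (i, j))

def lineSumMatrix (R m n : Type*) [Ring R] [DecidableEq m] [DecidableEq n] :
    Matrix (n ⊕ m) (m × n) R :=
  of fun r p => Sum.elim (fun j => if p.2 = j then 1 else 0) (fun i => if p.1 = i then 1 else 0) r

lemma lineSumMatrix_mulVec [Ring R] [DecidableEq m] [DecidableEq n] (x : m × n → R) :
    lineSumMatrix R m n *ᵥ x = lineSums x := by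
  ext (j | i) <;>
    simp [lineSumMatrix, lineSums, mulVec, dotProduct, Fintype.sum_prod_type,
      Finset.sum_comm (γ := m)]

lemma lineSums_vec_eq_zero_iff [Semiring R] (Z : Matrix m n R) :
    lineSums (vec Z) = 0 ↔ Z *ᵥ 1 = 0 ∧ 1 ᵥ* Z = 0 := by
  simp [funext_iff, lineSums, mulVec, vecMul, dotProduct]

lemma lineSums_sub_const [Ring R] (x : n × n → R) (c : R) :
    lineSums (x - fun _ => c) = lineSums x - fun _ => (Fintype.card n : R) * c := by
  ext (i | j) <;> simp [lineSums, Finset.sum_sub_distrib]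

end lineSums

variable [CommRing R]

lemma mem_range_kronecker_zeroSumBasis {m : ℕ} {x : Fin (m + 1) × Fin (m + 1) → R} :
    x ∈ LinearMap.range (zeroSumBasis R m ⊗ₖ zeroSumBasis R m).mulVecLin ↔ lineSums x = 0 := by
  obtain ⟨Z, rfl⟩ := vec_bijective.surjective x
  rw [lineSums_vec_eq_zero_iff]
  constructor
  · rintro ⟨y, hy⟩
    obtain ⟨Y, rfl⟩ := vec_bijective.surjective y
    rw [mulVecLin_apply, kronecker_mulVec_vec, vec_inj] at hy
    subst hy
    constructor
    · rw [← mulVec_mulVec, mulVec_transpose, one_vecMul_zeroSumBasis, mulVec_zero]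
    · rw [← vecMul_vecMul, ← vecMul_vecMul, one_vecMul_zeroSumBasis, zero_vecMul, zero_vecMul]
  · rintro ⟨hrow, hcol⟩
    refine ⟨vec (Z.submatrix Fin.castSucc Fin.castSucc), ?_⟩
    rw [mulVecLin_apply, kronecker_mulVec_vec, zeroSumBasis_mul_mul_transpose hrow hcol]

lemma mem_range_fromBlocks_one_zero {l m n : Type*} [Fintype l] [Fintype m] [DecidableEq l]
    (C : Matrix n l R) (D : Matrix n m R) (x : l ⊕ n → R) :
    x ∈ LinearMap.range (fromBlocks 1 0 C D).mulVecLin ↔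
      x ∘ Sum.inr - C *ᵥ (x ∘ Sum.inl) ∈ LinearMap.range D.mulVecLin := by
  simp only [LinearMap.mem_range, mulVecLin_apply, fromBlocks_mulVec, one_mulVec, zero_mulVec,
    add_zero]
  constructor
  · rintro ⟨y, rfl⟩
    exact ⟨y ∘ Sum.inr, by simp⟩
  · rintro ⟨w, hw⟩
    refine ⟨Sum.elim (x ∘ Sum.inl) w, ?_⟩
    ext (i | j) <;> simp [hw]

/-- The facial-reduction matrix `V̂ = [[1, 0], [e/n, Vₑ ⊗ Vₑ]]` with
`Vₑ = [I_{n-1}; −eᵀ]` satisfies `range V̂ = null K`, where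
`K = [−eᵀ; Hᵀ][−e, H]` is the exposing matrix of the assignment constraints. -/
theorem range_Vhat_eq_null_K (n : ℕ) (hn : 1 ≤ n)
    (Ve : Matrix (Fin n) (Fin (n - 1)) ℝ)
    (hVe : Ve = Matrix.of fun (i : Fin n) (j : Fin (n - 1)) =>
        if (i : ℕ) = (j : ℕ) then (1 : ℝ) else if (i : ℕ) = n - 1 then -1 else 0)
    (Vhat : Matrix (Unit ⊕ Fin n × Fin n) (Unit ⊕ Fin (n - 1) × Fin (n - 1)) ℝ)
    (hVhat : Vhat = Matrix.fromBlocks 1 0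
        (Matrix.of fun _ _ => (1 : ℝ) / n) (Ve ⊗ₖ Ve))
    (H : Matrix (Fin n ⊕ Fin n) (Fin n × Fin n) ℝ)
    (hH : H = Matrix.of fun r : Fin n ⊕ Fin n => fun p : Fin n × Fin n =>
        Sum.elim (fun i => if p.2 = i then (1 : ℝ) else 0)
          (fun i => if p.1 = i then (1 : ℝ) else 0) r)
    (M : Matrix (Fin n ⊕ Fin n) (Unit ⊕ Fin n × Fin n) ℝ)
    (hM : M = Matrix.of fun r c =>
        Sum.elim (fun _ : Unit => (-1 : ℝ)) (fun p : Fin n × Fin n => H r p) c) :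
    LinearMap.range Vhat.mulVecLin = LinearMap.ker (Mᵀ * M).mulVecLin := by
  obtain ⟨m, rfl⟩ : ∃ m, n = m + 1 := ⟨n - 1, by omega⟩
  replace hVe : Ve = zeroSumBasis ℝ m := hVe
  replace hH : H = lineSumMatrix ℝ (Fin (m + 1)) (Fin (m + 1)) := hH
  replace hM : M = fromCols (of fun _ _ => -1) H := hM
  subst hVe hH hM hVhat
  rw [ker_mulVecLin_transpose_mul_self]
  ext x
  rw [mem_range_fromBlocks_one_zero, mem_range_kronecker_zeroSumBasis, LinearMap.mem_ker,
    mulVecLin_apply, fromCols_mulVec, lineSumMatrix_mulVec]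
  set t := x (Sum.inl ())
  have hcenter : (of fun (_ : Fin (m + 1) × Fin (m + 1)) (_ : Unit) => (1 : ℝ) / (m + 1 : ℕ)) *ᵥ
      (x ∘ Sum.inl) = fun _ => t / (m + 1 : ℕ) := by
    ext; simp [mulVec, dotProduct, t, div_eq_inv_mul]
  have hconst : (of fun (_ : Fin (m + 1) ⊕ Fin (m + 1)) (_ : Unit) => (-1 : ℝ)) *ᵥ
      (x ∘ Sum.inl) = -fun _ => t := by
    ext; simp [mulVec, dotProduct, t]
  rw [hcenter, lineSums_sub_const, hconst, Fintype.card_fin,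
    mul_div_cancel₀ t (Nat.cast_ne_zero.2 m.succ_ne_zero), sub_eq_zero, neg_add_eq_zero, eq_comm]
end

section
/- Suppose Y ∈ S^{n²+1} satisfies Y = V R V^T for some R ⪰ 0 where V has full column rank with range(V) = null(K) (K the exposing matrix from the assignment constraints), Y_{00} = 1, and the gangster constraints hold (off-diagonal entries of diagonal blocks of the lower-right n²×n² submatrix Ȳ are zero, and diagonal entries of off-diagonal blocks of Ȳ are zero). Then the sum of the n diagonal n×n blocks of Ȳ equals the identity I_n. -/
open Matrix

/-- If `Y = V R Vᵀ` with `R ⪰ 0`, `V` of full column rank with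
`range V = null K` (`K = MᵀM` the exposing matrix), `Y₀₀ = 1`, and the
gangster constraints hold, then the sum of the `n` diagonal `n×n` blocks of
the lower-right `n²×n²` submatrix of `Y` is the identity. -/
theorem bodiag_eq_id (n : ℕ) {m : Type*} [Fintype m]
    (Y : Matrix (Unit ⊕ Fin n × Fin n) (Unit ⊕ Fin n × Fin n) ℝ)
    (V : Matrix (Unit ⊕ Fin n × Fin n) m ℝ)
    (R : Matrix m m ℝ)
    (H : Matrix (Fin n ⊕ Fin n) (Fin n × Fin n) ℝ)
    (hH : H = Matrix.of fun r : Fin n ⊕ Fin n => fun p : Fin n × Fin n =>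
        Sum.elim (fun i => if p.2 = i then (1 : ℝ) else 0)
          (fun i => if p.1 = i then (1 : ℝ) else 0) r)
    (M : Matrix (Fin n ⊕ Fin n) (Unit ⊕ Fin n × Fin n) ℝ)
    (hM : M = Matrix.of fun r c =>
        Sum.elim (fun _ : Unit => (-1 : ℝ)) (fun p : Fin n × Fin n => H r p) c)
    (hY : Y = V * R * Vᵀ)
    (hR : R.PosSemidef)
    (hVinj : Function.Injective V.mulVecLin)
    (hV : LinearMap.range V.mulVecLin = LinearMap.ker (Mᵀ * M).mulVecLin)
    (hY00 : Y (Sum.inl ()) (Sum.inl ()) = 1)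
    (hgang1 : ∀ i k l : Fin n, k ≠ l → Y (Sum.inr (i, k)) (Sum.inr (i, l)) = 0)
    (hgang2 : ∀ i j k : Fin n, i ≠ j → Y (Sum.inr (i, k)) (Sum.inr (j, k)) = 0) :
    ∀ k l : Fin n, (∑ i : Fin n, Y (Sum.inr (i, k)) (Sum.inr (i, l))) =
      if k = l then 1 else 0 := by
  classical
  -- symmetry of Y
  have hRsym : Rᵀ = R := by
    have := hR.1
    rwa [IsHermitian, conjTranspose_eq_transpose_of_trivial] at this
  have hYsym : Yᵀ = Y := by
    rw [hY, transpose_mul, transpose_mul, transpose_transpose, hRsym, Matrix.mul_assoc]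
  -- M * V = 0
  have hMV : M * V = 0 := by
    ext i j
    have hmem : V.mulVec (Pi.single j 1) ∈ LinearMap.range V.mulVecLin :=
      ⟨Pi.single j 1, rfl⟩
    rw [hV, LinearMap.mem_ker] at hmem
    have h0 : M.mulVec (V.mulVec (Pi.single j 1)) = 0 := by
      refine (conjTranspose_mul_self_mulVec_eq_zero M _).mp ?_
      rw [conjTranspose_eq_transpose_of_trivial]
      exact hmem
    have h1 : (M * V).mulVec (Pi.single j 1) = 0 := by
      rw [← mulVec_mulVec]; exact h0
    have := congrFun h1 i
    simpa [mulVec_single] using this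
  have hMY : M * Y = 0 := by
    rw [hY, ← Matrix.mul_assoc, ← Matrix.mul_assoc, hMV, Matrix.zero_mul, Matrix.zero_mul]
  -- row equations from (M*Y) (inl k) c = 0
  have hrow : ∀ (kk : Fin n) (c : Unit ⊕ Fin n × Fin n),
      (∑ i : Fin n, Y (Sum.inr (i, kk)) c) = Y (Sum.inl ()) c := by
    intro kk c
    have h := congrFun (congrFun hMY (Sum.inl kk)) c
    simp only [Matrix.mul_apply, Fintype.sum_sum_type, Fintype.sum_prod_type, hM, hH,
      Matrix.of_apply, Sum.elim_inl, Sum.elim_inr, Pi.zero_apply, Matrix.zero_apply,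
      ite_mul, one_mul, zero_mul, Finset.univ_unique, Finset.sum_const,
      Finset.card_singleton, one_smul] at h
    simp only [Finset.sum_ite_eq', Finset.mem_univ, if_true] at h
    simp at h
    linarith [h]
  intro k l
  by_cases hkl : k = l
  · subst hkl
    simp only [if_pos rfl]
    have hdiag : ∀ j : Fin n, Y (Sum.inr (j, k)) (Sum.inr (j, k)) =
        Y (Sum.inr (j, k)) (Sum.inl ()) := by
      intro j
      have h := hrow k (Sum.inr (j, k))
      rw [Finset.sum_eq_single j (fun i _ hij => hgang2 i j k hij) (by simp)] at h
      rw [h]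
      exact (congrFun (congrFun hYsym (Sum.inl ())) (Sum.inr (j, k))).symm
    calc (∑ i : Fin n, Y (Sum.inr (i, k)) (Sum.inr (i, k)))
        = ∑ i : Fin n, Y (Sum.inr (i, k)) (Sum.inl ()) := by
          exact Finset.sum_congr rfl fun i _ => hdiag i
      _ = Y (Sum.inl ()) (Sum.inl ()) := hrow k (Sum.inl ())
      _ = 1 := hY00
  · simp only [if_neg hkl]
    exact Finset.sum_eq_zero fun i _ => hgang1 i k l hkl
end
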